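/- arXiv:2509.05262 — 2 statements merged into one kernel-verified Lean document; each statement's English description precedes it below -/
import Mathlib

section
/- Conservation of mass and first moment for the limit solution: Let K be a kernel satisfying the global existence assumption with parameters μ, ν, λ = max(μ,ν) > 1, α ≥ 0, φ ∈ Y⁺_{-2α,2λ}, let c₀ ∈ Y⁺_{-α,λ}, and for each integer n ≥ 2 let c^n be the unique nonnegative solution of the truncated system with initial datum c₀·1_{(1/n,n)}, extended by zero. Suppose c : [0,∞) → Y⁺_{-α,λ} is a weak solution of CGEDG with initial datum c₀ obtained as a limit of a subsequence (c^{n_k}) in the sense that for each t ≥ 0, c^{n_k}_t → c_t weakly in L¹((0,m)) for every m > 0, and sup_{k} sup_{t∈[0,T]} M_{-α,λ}(c^{n_k}_t) < ∞ for every T < ∞. Then for all t ≥ 0, M₀(c_t) = M₀(c₀) and M₁(c_t) = M₁(c₀). -/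
open MeasureTheory Set Filter
open scoped ENNReal Topology

noncomputable section

/-- `x̂ := min 1 x` -/
def hatm (x : ℝ) : ℝ := min 1 x

/-- `x̌ := max 1 x` -/
def checkm (x : ℝ) : ℝ := max 1 x

/-- discrete Laplacian `(Δ_z f)(x) = f(x+z) - 2 f(x) + f(x-z)` -/
def dLap (f : ℝ → ℝ) (z x : ℝ) : ℝ := f (x + z) - 2 * f x + f (x - z)

/-- bounded measurable test function -/
def BddMeas (f : ℝ → ℝ) : Prop := Measurable f ∧ ∃ M : ℝ, ∀ x, |f x| ≤ M

/-- the weighted L¹ norm `‖c‖_{-β,r} = ∫₀^∞ (x^{-β} + x^r) |c x| dx` -/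
def Ynorm (β r : ℝ) (c : ℝ → ℝ) : ℝ :=
  ∫ x in Ioi (0:ℝ), (x ^ (-β) + x ^ r) * |c x|

/-- membership in the weighted space `Y_{-β,r}` -/
def MemY (β r : ℝ) (c : ℝ → ℝ) : Prop :=
  Measurable c ∧ IntegrableOn (fun x => (x ^ (-β) + x ^ r) * |c x|) (Ioi (0:ℝ))

/-- membership in the positive cone `Y⁺_{-β,r}` -/
def MemYplus (β r : ℝ) (c : ℝ → ℝ) : Prop :=
  MemY β r c ∧ ∀ᵐ x ∂(volume.restrict (Ioi (0:ℝ))), 0 ≤ c x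

/-- the moment `M_l(c) = ∫₀^∞ x^l c x dx` -/
def Mom (l : ℝ) (c : ℝ → ℝ) : ℝ := ∫ x in Ioi (0:ℝ), x ^ l * c x

/-- finiteness of the `l`-th moment -/
def MomFin (l : ℝ) (c : ℝ → ℝ) : Prop :=
  IntegrableOn (fun x => x ^ l * c x) (Ioi (0:ℝ))

/-- the mixed moment `M_{-α,λ}(c) = ∫₀^∞ x̂^{-α} x̌^λ c x dx` -/
def MomMix (a lam : ℝ) (c : ℝ → ℝ) : ℝ :=
  ∫ x in Ioi (0:ℝ), hatm x ^ (-a) * checkm x ^ lam * c x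

/-- `‖φ‖₀ = ∫₀^∞ φ` -/
def phiNorm0 (φ : ℝ → ℝ) : ℝ := ∫ z in Ioi (0:ℝ), φ z

/-- `‖φ‖_{0,r} = ∫₀^∞ (1 + z^r) φ(z) dz` -/
def phiNorm (r : ℝ) (φ : ℝ → ℝ) : ℝ := ∫ z in Ioi (0:ℝ), (1 + z ^ r) * φ z

/-- a kernel: measurable, nonnegative, symmetric in the first two arguments,
vanishing for `z > x` -/
structure IsKernel (K : ℝ → ℝ → ℝ → ℝ) : Prop where
  meas : Measurable (fun p : ℝ × ℝ × ℝ => K p.1 p.2.1 p.2.2)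
  nonneg : ∀ x y z, 0 ≤ K x y z
  symm : ∀ x y z, K x y z = K y x z
  vanish : ∀ x y z, x < z → K x y z = 0

/-- the domain `D = {(x,y,z) ∈ [0,∞)³ : x ≥ z, y ≥ z}` -/
def Dcgedg : Set (ℝ × ℝ × ℝ) :=
  {p | 0 ≤ p.1 ∧ 0 ≤ p.2.1 ∧ 0 ≤ p.2.2 ∧ p.2.2 ≤ p.1 ∧ p.2.2 ≤ p.2.1}

/-- weak solution of CGEDG with kernel `K`, initial datum `c₀` on `[0,T)`,
taking values in `Y⁺_{-β,r}`.  Coordinates: `p = (s, x, y, z)`. -/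
structure IsWeakSolution (K : ℝ → ℝ → ℝ → ℝ) (β r : ℝ) (T : ℝ≥0∞)
    (c₀ : ℝ → ℝ) (c : ℝ → ℝ → ℝ) : Prop where
  mem : ∀ t : ℝ, 0 ≤ t → ENNReal.ofReal t < T → MemYplus β r (c t)
  cont : ∀ f : ℝ → ℝ, BddMeas f →
    ContinuousOn (fun t => ∫ x in Ioi (0:ℝ), f x * c t x)
      {t : ℝ | 0 ≤ t ∧ ENNReal.ofReal t < T}
  bdd : ∃ C : ℝ, ∀ t : ℝ, 0 ≤ t → ENNReal.ofReal t < T → Ynorm β r (c t) ≤ C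
  integ : ∀ t : ℝ, 0 ≤ t → ENNReal.ofReal t < T →
    IntegrableOn (fun p : ℝ × ℝ × ℝ × ℝ =>
        K p.2.1 p.2.2.1 p.2.2.2 * c p.1 p.2.1 * c p.1 p.2.2.1)
      ((Ioc (0:ℝ) t) ×ˢ Dcgedg)
  weak : ∀ t : ℝ, 0 ≤ t → ENNReal.ofReal t < T → ∀ f : ℝ → ℝ, BddMeas f →
    (∫ x in Ioi (0:ℝ), f x * (c t x - c₀ x)) =
      ∫ p in (Ioc (0:ℝ) t) ×ˢ Dcgedg,
        dLap f p.2.2.2 p.2.1 *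
          (K p.2.1 p.2.2.1 p.2.2.2 * c p.1 p.2.1 * c p.1 p.2.2.1)

/-- the bound on the second derivative of the kernel in its first argument:
`∂₁² K(x,y,z) ≤ ŷ^{-α} y̌^λ φ(z)` for `x ≥ 0` (together with twice
differentiability in the first argument). -/
def SecondDerivBound (K : ℝ → ℝ → ℝ → ℝ) (a lam : ℝ) (φ : ℝ → ℝ) : Prop :=
  ∀ y z, 0 ≤ y → 0 ≤ z → ∀ x, 0 ≤ x →
    DifferentiableWithinAt ℝ (fun w => K w y z) (Ici 0) x ∧
    DifferentiableWithinAt ℝ (derivWithin (fun w => K w y z) (Ici 0)) (Ici 0) x ∧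
    derivWithin (derivWithin (fun w => K w y z) (Ici 0)) (Ici 0) x ≤
      hatm y ^ (-a) * checkm y ^ lam * φ z

/-- the singular bound `(min(1,x-z))^{-α} K(x,y,z) ≤ Cα x̂^{-2α} ŷ^{-α} x̌^λ y̌^λ φ(z)`
for `x ≥ z ≥ 0`. -/
def SingularBound (K : ℝ → ℝ → ℝ → ℝ) (a lam Ca : ℝ) (φ : ℝ → ℝ) : Prop :=
  ∀ x y z, 0 ≤ y → 0 ≤ z → z ≤ x →
    (min 1 (x - z)) ^ (-a) * K x y z ≤
      Ca * hatm x ^ (-(2*a)) * hatm y ^ (-a) * checkm x ^ lam * checkm y ^ lam * φ z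

/-- the global existence assumption (Assumption 1.3) with parameters `μ, ν, α` and
weight `φ`; here `λ = max μ ν`. -/
structure GlobalExistenceAssumption (K : ℝ → ℝ → ℝ → ℝ) (μ ν a : ℝ) (φ : ℝ → ℝ) :
    Prop where
  hμ : μ ∈ Icc (0:ℝ) 2
  hν : ν ∈ Icc (0:ℝ) 2
  hμν : μ + ν ≤ 3
  hlam : 1 < max μ ν
  ha : 0 ≤ a
  hφ : MemYplus (2*a) (2 * max μ ν) φ
  growth : ∀ x y z, 0 ≤ x → 0 ≤ y → 0 ≤ z →
    K x y z ≤ hatm x ^ (-a) * hatm y ^ (-a) *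
      ((checkm x ^ μ * checkm y ^ ν + checkm x ^ ν * checkm y ^ μ) / 2) * φ z
  deriv2 : SecondDerivBound K a (max μ ν) φ
  sing : 0 < a → ∃ Ca > 0, SingularBound K a (max μ ν) Ca φ

/-- the gelation time of a solution on `[0,T)`:
`T_gel = sup { t ∈ [0,T) : M₂(c_t) < ∞ }` (as an extended real). -/
def gelTime (T : ℝ≥0∞) (c : ℝ → ℝ → ℝ) : ℝ≥0∞ :=
  sSup {s : ℝ≥0∞ | ∃ t : ℝ, s = ENNReal.ofReal t ∧ 0 ≤ t ∧
    ENNReal.ofReal t < T ∧ MomFin 2 (c t)}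

/-- the truncated kernel `K_n` -/
def Ktrunc (K : ℝ → ℝ → ℝ → ℝ) (n : ℕ) (x y z : ℝ) : ℝ :=
  if (1/(n:ℝ) < x ∧ x < n) ∧ (1/(n:ℝ) < y ∧ y < n) ∧ (1/(n:ℝ) < z ∧ z < n) ∧
     (0 < x + z ∧ x + z < n) ∧ (0 < y + z ∧ y + z < n) ∧
     1/(n:ℝ) < x - z ∧ 1/(n:ℝ) < y - z
  then K x y z else 0

/-- the right-hand side of the truncated system; coordinates `p = (z, y)`. -/
def truncRHS (K : ℝ → ℝ → ℝ → ℝ) (n : ℕ) (c : ℝ → ℝ) (x : ℝ) : ℝ :=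
  (∫ p in (Ioi (0:ℝ)) ×ˢ (Ioi (0:ℝ)),
      Ktrunc K n p.2 (x - p.1) p.1 * c p.2 * c (x - p.1))
  - (∫ p in (Ioi (0:ℝ)) ×ˢ (Ioi (0:ℝ)),
      Ktrunc K n x p.2 p.1 * c x * c p.2)
  - (∫ p in (Ioi (0:ℝ)) ×ˢ (Ioi (0:ℝ)),
      Ktrunc K n p.2 x p.1 * c p.2 * c x)
  + (∫ p in (Ioi (0:ℝ)) ×ˢ (Ioi (0:ℝ)),
      Ktrunc K n (x + p.1) p.2 p.1 * c (x + p.1) * c p.2)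

/-- classical solution of the truncated system on `L¹((1/n,n))`, extended by zero
outside `(1/n, n)`. -/
structure IsTruncatedSolution (K : ℝ → ℝ → ℝ → ℝ) (n : ℕ) (c : ℝ → ℝ → ℝ) :
    Prop where
  meas : ∀ t : ℝ, Measurable (c t)
  zero_outside : ∀ t : ℝ, ∀ x, x ∉ Ioo (1/(n:ℝ)) (n:ℝ) → c t x = 0
  integrable : ∀ t : ℝ, 0 ≤ t → IntegrableOn (c t) (Ioo (1/(n:ℝ)) (n:ℝ))
  ode : ∀ x ∈ Ioo (1/(n:ℝ)) (n:ℝ), ∀ t : ℝ, 0 ≤ t →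
    HasDerivWithinAt (fun s => c s x) (truncRHS K n (c t) x) (Ici 0) t

/-- de la Vallée-Poussin class `C_VP` -/
structure IsCVP (σ : ℝ → ℝ) : Prop where
  contDiff : ContDiffOn ℝ 2 σ (Ici 0)
  nonneg : ∀ x, 0 ≤ x → 0 ≤ σ x
  convex : ConvexOn ℝ (Ici 0) σ
  zero : σ 0 = 0
  deriv_zero : derivWithin σ (Ici 0) 0 = 0
  deriv_concave : ConcaveOn ℝ (Ici 0) (derivWithin σ (Ici 0))
  deriv_pos : ∀ x, 0 < x → 0 < derivWithin σ (Ici 0) x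
  deriv_top : Tendsto (derivWithin σ (Ici 0)) atTop atTop
  slope_top : Tendsto (fun x => σ x / x) atTop atTop

/-! Both identities follow from the weak formulation. The test function `1` has vanishing
discrete Laplacian, which gives conservation of mass. For the first moment test with
`ramp R = max 0 (min · R)`: being monotone and 1-Lipschitz it satisfies `|Δ_z ramp R| ≤ z`,
and being affine on `[0, R]` it has `Δ_z ramp R (x) = 0` once `z ≤ x` and `x + z ≤ R`.
Letting `R → ∞` by dominated convergence kills the collision term, provided `z K c_s c_s` is
integrable on `(0, t] × D`. That holds because the growth bound gives
`K(x,y,z) ≤ w(x) w(y) φ(z)` with `w = x̂^{-α} x̌^λ ≤ x^{-α} + x^λ`, so the integral splits into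
`(∫ w c_s)² ∫ z φ ≤ ‖c_s‖²_{-α,λ} ‖φ‖_{-2α,2λ}`. -/

lemma dLap_const (b z x : ℝ) : dLap (fun _ => b) z x = 0 := by
  simp only [dLap]; ring

lemma abs_dLap_le {f : ℝ → ℝ} (hf : Monotone f) (hL : LipschitzWith 1 f) {z : ℝ} (hz : 0 ≤ z)
    (x : ℝ) : |dLap f z x| ≤ z := by
  have h₁ := hf (show x ≤ x + z by linarith)
  have h₂ := hf (show x - z ≤ x by linarith)
  have h₃ := hL.le_add_mul (x + z) x
  have h₄ := hL.le_add_mul x (x - z)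
  simp only [NNReal.coe_one, one_mul, Real.dist_eq, add_sub_cancel_left, sub_sub_cancel,
    abs_of_nonneg hz] at h₃ h₄
  rw [dLap, abs_le]
  constructor <;> linarith

def ramp (R x : ℝ) : ℝ := max 0 (min x R)

lemma ramp_nonneg (R x : ℝ) : 0 ≤ ramp R x := le_max_left _ _

lemma ramp_le {R x : ℝ} (hx : 0 ≤ x) : ramp R x ≤ x := max_le hx (min_le_left _ _)

lemma ramp_eq {R x : ℝ} (hx : 0 ≤ x) (hR : x ≤ R) : ramp R x = x := by
  rw [ramp, min_eq_left hR, max_eq_right hx]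

lemma monotone_ramp (R : ℝ) : Monotone (ramp R) := fun _ _ h =>
  max_le_max le_rfl (min_le_min h le_rfl)

lemma lipschitzWith_ramp (R : ℝ) : LipschitzWith 1 (ramp R) :=
  (LipschitzWith.id.min_const R).const_max 0

lemma continuous_ramp (R : ℝ) : Continuous (ramp R) := (lipschitzWith_ramp R).continuous

lemma bddMeas_ramp (R : ℝ) : BddMeas (ramp R) :=
  ⟨(continuous_ramp R).measurable, max 0 R, fun x => by
    rw [abs_of_nonneg (ramp_nonneg R x)]; exact max_le_max le_rfl (min_le_right _ _)⟩

lemma dLap_ramp_eq_zero {R z x : ℝ} (hz : 0 ≤ z) (hzx : z ≤ x) (hR : x + z ≤ R) :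
    dLap (ramp R) z x = 0 := by
  rw [dLap, ramp_eq (by linarith) hR, ramp_eq (by linarith) (by linarith),
    ramp_eq (by linarith) (by linarith)]
  ring

lemma rpow_le_rpow_neg_add_rpow {a p r x : ℝ} (ha : 0 ≤ a) (hp : 0 ≤ p) (hpr : p ≤ r)
    (hx : 0 < x) : x ^ p ≤ x ^ (-a) + x ^ r := by
  rcases le_total x 1 with h | h
  · have := Real.rpow_le_rpow_of_exponent_ge hx h (show -a ≤ p by linarith)
    have := Real.rpow_nonneg hx.le r
    linarith
  · have := Real.rpow_le_rpow_of_exponent_le h hpr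
    have := Real.rpow_nonneg hx.le (-a)
    linarith

def mixWeight (a lam x : ℝ) : ℝ := hatm x ^ (-a) * checkm x ^ lam

lemma mixWeight_nonneg (a lam : ℝ) {x : ℝ} (hx : 0 ≤ x) : 0 ≤ mixWeight a lam x :=
  mul_nonneg (Real.rpow_nonneg (le_min zero_le_one hx) _)
    (Real.rpow_nonneg (zero_le_one.trans (le_max_left _ _)) _)

lemma measurable_mixWeight (a lam : ℝ) : Measurable (mixWeight a lam) := by
  unfold mixWeight hatm checkm; fun_prop

lemma mixWeight_le {a lam x : ℝ} (hx : 0 < x) :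
    mixWeight a lam x ≤ x ^ (-a) + x ^ lam := by
  rcases le_total x 1 with h | h
  · rw [mixWeight, hatm, checkm, min_eq_right h, max_eq_left h, Real.one_rpow, mul_one]
    linarith [Real.rpow_nonneg hx.le lam]
  · rw [mixWeight, hatm, checkm, min_eq_left h, max_eq_right h, Real.one_rpow, one_mul]
    linarith [Real.rpow_nonneg hx.le (-a)]

lemma MemY.integrableOn_rpow_mul {β r p : ℝ} {c : ℝ → ℝ} (hc : MemY β r c) (hβ : 0 ≤ β)
    (hp : 0 ≤ p) (hpr : p ≤ r) : IntegrableOn (fun x => x ^ p * c x) (Ioi 0) := by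
  refine hc.2.mono' ((by fun_prop : Measurable fun x : ℝ => x ^ p).mul hc.1).aestronglyMeasurable
    (ae_restrict_of_forall_mem measurableSet_Ioi fun x (hx : 0 < x) => ?_)
  rw [Real.norm_eq_abs, abs_mul, abs_of_nonneg (Real.rpow_nonneg hx.le p)]
  exact mul_le_mul_of_nonneg_right (rpow_le_rpow_neg_add_rpow hβ hp hpr hx) (abs_nonneg _)

lemma MemY.lintegral_le_Ynorm {β r : ℝ} {c g : ℝ → ℝ} (hc : MemY β r c)
    (hg : ∀ x, 0 < x → g x ≤ x ^ (-β) + x ^ r) :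
    ∫⁻ x in Ioi 0, ENNReal.ofReal (g x * |c x|) ≤ ENNReal.ofReal (Ynorm β r c) := by
  rw [Ynorm, ofReal_integral_eq_lintegral_ofReal hc.2
    (ae_restrict_of_forall_mem measurableSet_Ioi fun x (hx : 0 < x) => by positivity)]
  refine lintegral_mono_ae (ae_restrict_of_forall_mem measurableSet_Ioi fun x hx => ?_)
  exact ENNReal.ofReal_le_ofReal (mul_le_mul_of_nonneg_right (hg x hx) (abs_nonneg _))

lemma Mom_zero (c : ℝ → ℝ) : Mom 0 c = ∫ x in Ioi 0, c x := by
  simp only [Mom, Real.rpow_zero, one_mul]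

lemma Mom_one (c : ℝ → ℝ) : Mom 1 c = ∫ x in Ioi 0, x * c x := by
  simp only [Mom, Real.rpow_one]

lemma rpow_mul_rpow_add_swap_le {u v : ℝ} (hu : 1 ≤ u) (hv : 1 ≤ v) (μ ν : ℝ) :
    (u ^ μ * v ^ ν + u ^ ν * v ^ μ) / 2 ≤ u ^ max μ ν * v ^ max μ ν := by
  have h₁ : u ^ μ * v ^ ν ≤ u ^ max μ ν * v ^ max μ ν := by gcongr <;> simp
  have h₂ : u ^ ν * v ^ μ ≤ u ^ max μ ν * v ^ max μ ν := by gcongr <;> simp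
  linarith

lemma GlobalExistenceAssumption.le_mixWeight_mul {K : ℝ → ℝ → ℝ → ℝ} {μ ν a : ℝ}
    {φ : ℝ → ℝ} (hA : GlobalExistenceAssumption K μ ν a φ) {x y z : ℝ} (hx : 0 ≤ x)
    (hy : 0 ≤ y) (hz : 0 ≤ z) :
    K x y z ≤ mixWeight a (max μ ν) x * mixWeight a (max μ ν) y * |φ z| := by
  have hcx : 1 ≤ checkm x := le_max_left _ _
  have hcy : 1 ≤ checkm y := le_max_left _ _
  have hhat : 0 ≤ hatm x ^ (-a) * hatm y ^ (-a) :=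
    mul_nonneg (Real.rpow_nonneg (le_min zero_le_one hx) _)
      (Real.rpow_nonneg (le_min zero_le_one hy) _)
  have hsym : 0 ≤ (checkm x ^ μ * checkm y ^ ν + checkm x ^ ν * checkm y ^ μ) / 2 := by
    have : 0 ≤ checkm x := zero_le_one.trans hcx
    have : 0 ≤ checkm y := zero_le_one.trans hcy
    positivity
  calc K x y z ≤ hatm x ^ (-a) * hatm y ^ (-a) *
        ((checkm x ^ μ * checkm y ^ ν + checkm x ^ ν * checkm y ^ μ) / 2) * φ z :=
        hA.growth x y z hx hy hz
    _ ≤ hatm x ^ (-a) * hatm y ^ (-a) *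
        ((checkm x ^ μ * checkm y ^ ν + checkm x ^ ν * checkm y ^ μ) / 2) * |φ z| :=
        mul_le_mul_of_nonneg_left (le_abs_self _) (mul_nonneg hhat hsym)
    _ ≤ hatm x ^ (-a) * hatm y ^ (-a) *
        (checkm x ^ max μ ν * checkm y ^ max μ ν) * |φ z| := by
        gcongr; exact rpow_mul_rpow_add_swap_le hcx hcy μ ν
    _ = mixWeight a (max μ ν) x * mixWeight a (max μ ν) y * |φ z| := by
        simp only [mixWeight]; ring

lemma lintegral_prod_prod_mul {α β γ : Type*} [MeasurableSpace α] [MeasurableSpace β]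
    [MeasurableSpace γ] {μ₁ : Measure α} {μ₂ : Measure β} {μ₃ : Measure γ} [SFinite μ₂]
    [SFinite μ₃] {f : α → ℝ≥0∞} {g : β → ℝ≥0∞} {h : γ → ℝ≥0∞} (hf : AEMeasurable f μ₁)
    (hg : AEMeasurable g μ₂) (hh : AEMeasurable h μ₃) :
    ∫⁻ q, f q.1 * (g q.2.1 * h q.2.2) ∂μ₁.prod (μ₂.prod μ₃) =
      (∫⁻ x, f x ∂μ₁) * ((∫⁻ y, g y ∂μ₂) * ∫⁻ z, h z ∂μ₃) := by
  rw [lintegral_prod_mul (g := fun r : β × γ => g r.1 * h r.2) hf (hg.comp_fst.mul hh.comp_snd),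
    lintegral_prod_mul hg hh]

lemma integrable_prod_of_lintegral_le {α β : Type*} [MeasurableSpace α] [MeasurableSpace β]
    {μ : Measure α} {ν : Measure β} [IsFiniteMeasure μ] [SFinite ν] {F : α × β → ℝ}
    (hF : AEStronglyMeasurable F (μ.prod ν)) {B : ℝ≥0∞} (hB : B ≠ ∞)
    (h : ∀ᵐ s ∂μ, ∫⁻ q, ‖F (s, q)‖ₑ ∂ν ≤ B) : Integrable F (μ.prod ν) := by
  refine ⟨hF, ?_⟩
  rw [HasFiniteIntegral, lintegral_prod _ hF.enorm]
  exact (lintegral_mono_ae h).trans_lt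
    (by rw [lintegral_const]; exact ENNReal.mul_lt_top hB.lt_top (measure_lt_top _ _))

lemma measurableSet_Dcgedg : MeasurableSet Dcgedg := by
  simp only [Dcgedg, ofPred_and]
  exact (measurableSet_le measurable_const measurable_fst).inter
    ((measurableSet_le measurable_const measurable_snd.fst).inter
    ((measurableSet_le measurable_const measurable_snd.snd).inter
    ((measurableSet_le measurable_snd.snd measurable_fst).inter
    (measurableSet_le measurable_snd.snd measurable_snd.fst))))

lemma GlobalExistenceAssumption.enorm_mul_le {K : ℝ → ℝ → ℝ → ℝ} {μ ν a : ℝ} {φ : ℝ → ℝ}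
    (hK : ∀ x y z, 0 ≤ K x y z) (hA : GlobalExistenceAssumption K μ ν a φ) (d : ℝ → ℝ)
    {x y z : ℝ} (hx : 0 ≤ x) (hy : 0 ≤ y) (hz : 0 ≤ z) :
    ‖z * (K x y z * d x * d y)‖ₑ ≤
      ENNReal.ofReal (mixWeight a (max μ ν) x * |d x|) *
        (ENNReal.ofReal (mixWeight a (max μ ν) y * |d y|) * ENNReal.ofReal (z * |φ z|)) := by
  have hwx := mixWeight_nonneg a (max μ ν) hx
  have hwy := mixWeight_nonneg a (max μ ν) hy
  rw [Real.enorm_eq_ofReal_abs, ← ENNReal.ofReal_mul (by positivity),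
    ← ENNReal.ofReal_mul (by positivity)]
  refine ENNReal.ofReal_le_ofReal ?_
  calc |z * (K x y z * d x * d y)| = z * K x y z * |d x| * |d y| := by
        rw [abs_mul, abs_mul, abs_mul, abs_of_nonneg hz, abs_of_nonneg (hK x y z)]; ring
    _ ≤ z * (mixWeight a (max μ ν) x * mixWeight a (max μ ν) y * |φ z|) * |d x| * |d y| := by
        gcongr; exact hA.le_mixWeight_mul hx hy hz
    _ = mixWeight a (max μ ν) x * |d x| *
        (mixWeight a (max μ ν) y * |d y| * (z * |φ z|)) := by ring

lemma setLIntegral_Dcgedg_le {F : ℝ × ℝ × ℝ → ℝ} {f h : ℝ → ℝ≥0∞} (hf : Measurable f)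
    (hh : Measurable h) (hF : ∀ q ∈ Dcgedg, ‖F q‖ₑ ≤ f q.1 * (f q.2.1 * h q.2.2)) :
    ∫⁻ q in Dcgedg, ‖F q‖ₑ ≤
      (∫⁻ x in Ioi 0, f x) * ((∫⁻ x in Ioi 0, f x) * ∫⁻ z in Ioi 0, h z) := by
  have hsub : Dcgedg ⊆ Ici 0 ×ˢ (Ici 0 ×ˢ Ici 0) := fun q hq => ⟨hq.1, hq.2.1, hq.2.2.1⟩
  simp only [setLIntegral_congr (Ioi_ae_eq_Ici (a := (0 : ℝ)))]
  calc ∫⁻ q in Dcgedg, ‖F q‖ₑ ≤ ∫⁻ q in Dcgedg, f q.1 * (f q.2.1 * h q.2.2) :=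
        setLIntegral_mono' measurableSet_Dcgedg hF
    _ ≤ ∫⁻ q in Ici 0 ×ˢ (Ici 0 ×ˢ Ici 0), f q.1 * (f q.2.1 * h q.2.2) :=
        lintegral_mono_set hsub
    _ = _ := by
        rw [Measure.volume_eq_prod, ← Measure.prod_restrict, Measure.volume_eq_prod,
          ← Measure.prod_restrict]
        exact lintegral_prod_prod_mul hf.aemeasurable hf.aemeasurable hh.aemeasurable

lemma IsWeakSolution.integrableOn_mul_collision {K : ℝ → ℝ → ℝ → ℝ} {μ ν a : ℝ}
    {φ : ℝ → ℝ} {T : ℝ≥0∞} {c₀ : ℝ → ℝ} {c : ℝ → ℝ → ℝ} (hK : ∀ x y z, 0 ≤ K x y z)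
    (hA : GlobalExistenceAssumption K μ ν a φ) (hc : IsWeakSolution K a (max μ ν) T c₀ c)
    {t : ℝ} (ht : 0 ≤ t) (htT : ENNReal.ofReal t < T) :
    IntegrableOn (fun p : ℝ × ℝ × ℝ × ℝ =>
        p.2.2.2 * (K p.2.1 p.2.2.1 p.2.2.2 * c p.1 p.2.1 * c p.1 p.2.2.1))
      (Ioc 0 t ×ˢ Dcgedg) := by
  obtain ⟨C, hC⟩ := hc.bdd
  have hmem : ∀ s ∈ Ioc 0 t, MemYplus a (max μ ν) (c s) ∧ Ynorm a (max μ ν) (c s) ≤ C :=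
    fun s hs =>
      have hsT := (ENNReal.ofReal_le_ofReal hs.2).trans_lt htT
      ⟨hc.mem s hs.1.le hsT, hC s hs.1.le hsT⟩
  have hφ : ∫⁻ z in Ioi 0, ENNReal.ofReal (z * |φ z|) ≤
      ENNReal.ofReal (Ynorm (2 * a) (2 * max μ ν) φ) :=
    hA.hφ.1.lintegral_le_Ynorm fun z hz => by
      simpa using rpow_le_rpow_neg_add_rpow (p := 1) (by linarith [hA.ha]) zero_le_one
        (by linarith [hA.hlam]) hz
  have hinner : ∀ s ∈ Ioc 0 t,
      ∫⁻ q in Dcgedg, ‖q.2.2 * (K q.1 q.2.1 q.2.2 * c s q.1 * c s q.2.1)‖ₑ ≤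
        ENNReal.ofReal C * (ENNReal.ofReal C *
          ENNReal.ofReal (Ynorm (2 * a) (2 * max μ ν) φ)) := fun s hs => by
    have hw : ∫⁻ x in Ioi 0, ENNReal.ofReal (mixWeight a (max μ ν) x * |c s x|) ≤
        ENNReal.ofReal C :=
      ((hmem s hs).1.1.lintegral_le_Ynorm fun x hx => mixWeight_le hx).trans
        (ENNReal.ofReal_le_ofReal (hmem s hs).2)
    refine (setLIntegral_Dcgedg_le ?_ ?_ fun q hq =>
      hA.enorm_mul_le hK (c s) hq.1 hq.2.1 hq.2.2.1).trans (by gcongr)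
    · exact ENNReal.measurable_ofReal.comp
        ((measurable_mixWeight a _).mul (hmem s hs).1.1.1.abs)
    · exact ENNReal.measurable_ofReal.comp (measurable_id.mul hA.hφ.1.1.abs)
  rw [IntegrableOn, Measure.volume_eq_prod, ← Measure.prod_restrict]
  refine integrable_prod_of_lintegral_le ?_ (by finiteness)
    (ae_restrict_of_forall_mem measurableSet_Ioc hinner)
  rw [Measure.prod_restrict, ← Measure.volume_eq_prod]
  exact (measurable_snd.snd.snd).aestronglyMeasurable.mul (hc.integ t ht htT).1

lemma tendsto_setIntegral_ramp_mul {g : ℝ → ℝ}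
    (hgm : AEStronglyMeasurable g (volume.restrict (Ioi 0)))
    (hg : IntegrableOn (fun x => x * g x) (Ioi 0)) :
    Tendsto (fun n : ℕ => ∫ x in Ioi 0, ramp n x * g x) atTop
      (𝓝 (∫ x in Ioi 0, x * g x)) := by
  refine tendsto_integral_of_dominated_convergence (fun x => |x * g x|)
    (fun n => ((continuous_ramp n).aestronglyMeasurable.mul hgm)) hg.abs
    (fun n => ae_restrict_of_forall_mem measurableSet_Ioi fun x (hx : 0 < x) => ?_)
    (ae_restrict_of_forall_mem measurableSet_Ioi fun x (hx : 0 < x) => ?_)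
  · rw [Real.norm_eq_abs, abs_mul, abs_mul, abs_of_nonneg (ramp_nonneg _ _), abs_of_pos hx]
    exact mul_le_mul_of_nonneg_right (ramp_le hx.le) (abs_nonneg _)
  · obtain ⟨N, hN⟩ := exists_nat_ge x
    refine tendsto_const_nhds.congr' ?_
    filter_upwards [eventually_ge_atTop N] with n hn
    rw [ramp_eq hx.le (hN.trans (Nat.cast_le.mpr hn))]

lemma tendsto_integral_dLap_ramp_mul {α : Type*} [MeasurableSpace α] {μ : Measure α}
    {x z G : α → ℝ} (hx : Measurable x) (hz : Measurable z)
    (hzx : ∀ᵐ p ∂μ, 0 ≤ z p ∧ z p ≤ x p) (hGm : AEStronglyMeasurable G μ)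
    (hG : Integrable (fun p => z p * G p) μ) :
    Tendsto (fun n : ℕ => ∫ p, dLap (ramp n) (z p) (x p) * G p ∂μ) atTop (𝓝 0) := by
  have hmeas (n : ℕ) : Measurable fun p => dLap (ramp n) (z p) (x p) := by
    have := (continuous_ramp n).measurable
    unfold dLap; fun_prop
  simpa using tendsto_integral_of_dominated_convergence (f := fun _ => 0)
    (F := fun (n : ℕ) p => dLap (ramp n) (z p) (x p) * G p) (fun p => |z p * G p|)
    (fun n => (hmeas n).aestronglyMeasurable.mul hGm) hG.abs
    (fun n => hzx.mono fun p hp => by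
      rw [Real.norm_eq_abs, abs_mul, abs_mul, abs_of_nonneg hp.1]
      exact mul_le_mul_of_nonneg_right (abs_dLap_le (monotone_ramp n) (lipschitzWith_ramp n)
        hp.1 _) (abs_nonneg _))
    (hzx.mono fun p hp => by
      obtain ⟨N, hN⟩ := exists_nat_ge (x p + z p)
      refine tendsto_const_nhds.congr' ?_
      filter_upwards [eventually_ge_atTop N] with n hn
      rw [dLap_ramp_eq_zero hp.1 hp.2 (hN.trans (Nat.cast_le.mpr hn)), zero_mul])

lemma IsWeakSolution.mom_zero_eq {K : ℝ → ℝ → ℝ → ℝ} {β r : ℝ} {T : ℝ≥0∞}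
    {c₀ : ℝ → ℝ} {c : ℝ → ℝ → ℝ} (hc : IsWeakSolution K β r T c₀ c) (hβ : 0 ≤ β)
    (hr : 0 ≤ r) (hc₀ : MemY β r c₀) {t : ℝ} (ht : 0 ≤ t) (htT : ENNReal.ofReal t < T) :
    Mom 0 (c t) = Mom 0 c₀ := by
  have hweak := hc.weak t ht htT (fun _ => 1) ⟨measurable_const, 1, fun _ => by simp⟩
  simp only [dLap_const, zero_mul, integral_zero, one_mul] at hweak
  have hct : IntegrableOn (c t) (Ioi 0) := by
    simpa using (hc.mem t ht htT).1.integrableOn_rpow_mul hβ le_rfl hr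
  have hc₀' : IntegrableOn c₀ (Ioi 0) := by simpa using hc₀.integrableOn_rpow_mul hβ le_rfl hr
  rw [integral_sub hct hc₀', sub_eq_zero] at hweak
  rw [Mom_zero, Mom_zero, hweak]

lemma IsWeakSolution.mom_one_eq {K : ℝ → ℝ → ℝ → ℝ} {β r : ℝ} {T : ℝ≥0∞}
    {c₀ : ℝ → ℝ} {c : ℝ → ℝ → ℝ} (hc : IsWeakSolution K β r T c₀ c) (hβ : 0 ≤ β)
    (hr : 1 ≤ r) (hc₀ : MemY β r c₀) {t : ℝ} (ht : 0 ≤ t) (htT : ENNReal.ofReal t < T)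
    (hcoll : IntegrableOn (fun p : ℝ × ℝ × ℝ × ℝ =>
        p.2.2.2 * (K p.2.1 p.2.2.1 p.2.2.2 * c p.1 p.2.1 * c p.1 p.2.2.1))
      (Ioc 0 t ×ˢ Dcgedg)) :
    Mom 1 (c t) = Mom 1 c₀ := by
  have hct := (hc.mem t ht htT).1
  have h₁ : IntegrableOn (fun x => x * c t x) (Ioi 0) := by
    simpa using hct.integrableOn_rpow_mul hβ zero_le_one hr
  have h₀ : IntegrableOn (fun x => x * c₀ x) (Ioi 0) := by
    simpa using hc₀.integrableOn_rpow_mul hβ zero_le_one hr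
  have hlhs := tendsto_setIntegral_ramp_mul (g := fun x => c t x - c₀ x)
    (hct.1.sub hc₀.1).aestronglyMeasurable (by simp_rw [mul_sub]; exact h₁.sub h₀)
  have hrhs := tendsto_integral_dLap_ramp_mul measurable_snd.fst measurable_snd.snd.snd
    (ae_restrict_of_forall_mem (measurableSet_Ioc.prod measurableSet_Dcgedg)
      fun p hp => ⟨hp.2.2.2.1, hp.2.2.2.2.1⟩) (hc.integ t ht htT).1 hcoll
  simp only [← hc.weak t ht htT _ (bddMeas_ramp _)] at hrhs
  rw [Mom_one, Mom_one, ← sub_eq_zero, ← integral_sub h₁ h₀]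
  simpa only [mul_sub] using tendsto_nhds_unique hlhs hrhs

theorem limit_solution_conservation_general
    (K : ℝ → ℝ → ℝ → ℝ) (μ ν a : ℝ) (φ : ℝ → ℝ)
    (hK : IsKernel K) (hA : GlobalExistenceAssumption K μ ν a φ)
    (c₀ : ℝ → ℝ) (hc₀ : MemYplus a (max μ ν) c₀)
    (c : ℝ → ℝ → ℝ)
    (hc : IsWeakSolution K a (max μ ν) ⊤ c₀ c) :
    ∀ t : ℝ, 0 ≤ t → Mom 0 (c t) = Mom 0 c₀ ∧ Mom 1 (c t) = Mom 1 c₀ := by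
  intro t ht
  have htT : ENNReal.ofReal t < ⊤ := ENNReal.ofReal_lt_top
  exact ⟨hc.mom_zero_eq hA.ha (by linarith [hA.hlam]) hc₀.1 ht htT,
    hc.mom_one_eq hA.ha hA.hlam.le hc₀.1 ht htT
      (hc.integrableOn_mul_collision hK.nonneg hA ht htT)⟩

/-- Conservation of mass and first moment for the limit solution. -/
theorem limit_solution_conservation
    (K : ℝ → ℝ → ℝ → ℝ) (μ ν a : ℝ) (φ : ℝ → ℝ)
    (hK : IsKernel K) (hA : GlobalExistenceAssumption K μ ν a φ)
    (c₀ : ℝ → ℝ) (hc₀ : MemYplus a (max μ ν) c₀)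
    (cn : ℕ → ℝ → ℝ → ℝ)
    (hsol : ∀ n : ℕ, 2 ≤ n → IsTruncatedSolution K n (cn n))
    (hnn : ∀ n : ℕ, 2 ≤ n → ∀ t x : ℝ, 0 ≤ t → 0 ≤ cn n t x)
    (hinit : ∀ n : ℕ, 2 ≤ n → ∀ x : ℝ,
      cn n 0 x = Set.indicator (Ioo (1/(n:ℝ)) (n:ℝ)) c₀ x)
    (c : ℝ → ℝ → ℝ)
    (hc : IsWeakSolution K a (max μ ν) ⊤ c₀ c)
    (ns : ℕ → ℕ) (hns : StrictMono ns) (hns2 : ∀ k, 2 ≤ ns k)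
    (hconv : ∀ t : ℝ, 0 ≤ t → ∀ m : ℝ, 0 < m → ∀ g : ℝ → ℝ, BddMeas g →
      Tendsto (fun k => ∫ x in Ioo (0:ℝ) m, g x * cn (ns k) t x)
        atTop (𝓝 (∫ x in Ioo (0:ℝ) m, g x * c t x)))
    (hmom : ∀ T : ℝ, 0 < T → ∃ C : ℝ, ∀ k : ℕ, ∀ t ∈ Icc (0:ℝ) T,
      MomMix a (max μ ν) (cn (ns k) t) ≤ C) :
    ∀ t : ℝ, 0 ≤ t → Mom 0 (c t) = Mom 0 c₀ ∧ Mom 1 (c t) = Mom 1 c₀ :=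
  limit_solution_conservation_general K μ ν a φ hK hA c₀ hc₀ c hc
end
end

section
/- Conservation laws and monotonicity of the second moment: Let K be a kernel, let c₀ ∈ Y⁺_{0,2}, let 0 < T ≤ T_gel and let (c_t) be a weak solution of CGEDG with kernel K and initial datum c₀ on [0,T) in Y⁺_{0,2}, satisfying additionally ∫₀^t ∫_D z² K(x,y,z) c_s(x) c_s(y) d(x,y,z) ds < ∞ for all t ∈ [0,T). Then M₀(c_t) = M₀(c₀) and M₁(c_t) = M₁(c₀) for all t ∈ [0,T), and t ↦ M₂(c_t) is non-decreasing on [0,T); in fact M₂(c_t) − M₂(c₀) = 2∫₀^t ∫_D z² K(x,y,z) c_s(x) c_s(y) d(x,y,z) ds ≥ 0. -/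
open MeasureTheory Set Filter
open scoped ENNReal Topology

noncomputable section

/-!
Testing the weak formulation with `f = 1, x, x²` formally gives `Δ_z f = 0, 0, 2z²`, which are
the three identities. The last two test functions are unbounded, so they are replaced by bounded
cutoffs that agree with them on `[0, R]` and whose second differences are bounded by
`C (1 + z²)` uniformly in `R`; dominated convergence, with `c_t, c₀ ∈ Y_{0,2}` on the left and the
integrability of `z² K c c` on the right, lets `R → ∞`. Monotonicity of `M₂` then follows from
`z² K c c ≥ 0`.
-/
def collisionIntegrand (K : ℝ → ℝ → ℝ → ℝ) (c : ℝ → ℝ → ℝ) (p : ℝ × ℝ × ℝ × ℝ) : ℝ :=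
  K p.2.1 p.2.2.1 p.2.2.2 * c p.1 p.2.1 * c p.1 p.2.2.1

lemma dLap_congr {f g : ℝ → ℝ} {z x : ℝ} (h : ∀ y ∈ ({x - z, x, x + z} : Set ℝ), f y = g y) :
    dLap f z x = dLap g z x := by
  simp [dLap, h]

lemma measurable_dLap {f : ℝ → ℝ} (hf : Measurable f) :
    Measurable fun p : ℝ × ℝ × ℝ × ℝ => dLap f p.2.2.2 p.2.1 := by
  unfold dLap; fun_prop

lemma dLap_max_zero_bounds {z : ℝ} (hz : 0 ≤ z) (x : ℝ) :
    0 ≤ dLap (fun y => max y 0) z x ∧ dLap (fun y => max y 0) z x ≤ z := by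
  simp only [dLap]
  rcases le_total 0 (x - z) with h₁ | h₁ <;> rcases le_total 0 x with h₂ | h₂ <;>
    rcases le_total 0 (x + z) with h₃ | h₃ <;>
    simp only [max_eq_left, max_eq_right, *] <;> constructor <;> linarith

lemma dLap_max_zero_sq_bounds {z : ℝ} (hz : 0 ≤ z) (x : ℝ) :
    0 ≤ dLap (fun y => max y 0 ^ 2) z x ∧ dLap (fun y => max y 0 ^ 2) z x ≤ 2 * z ^ 2 := by
  simp only [dLap]
  rcases le_total 0 (x - z) with h₁ | h₁ <;> rcases le_total 0 x with h₂ | h₂ <;>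
    rcases le_total 0 (x + z) with h₃ | h₃ <;>
    simp only [max_eq_left, max_eq_right, *] <;> constructor <;> nlinarith

lemma dLap_comp_sub_const (f : ℝ → ℝ) (a z x : ℝ) :
    dLap (fun y => f (y - a)) z x = dLap f z (x - a) := by
  simp only [dLap, sub_right_comm, sub_add_eq_add_sub]

def linCutoff (R x : ℝ) : ℝ := max x 0 - max (x - R) 0

/- Three shifted copies of `(x⁺)²`, so the second derivative stays in `[-2, 2]`: the cutoff is
`x²` on `[0, R]` and the constant `2R²` beyond `2R`. Truncating `x²` at height `R²` instead would
produce second differences of size `R z`. -/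
def quadCutoff (R x : ℝ) : ℝ := max x 0 ^ 2 - 2 * max (x - R) 0 ^ 2 + max (x - 2 * R) 0 ^ 2

lemma linCutoff_eqOn (R : ℝ) : EqOn (linCutoff R) id (Icc 0 R) := by
  rintro x ⟨hx₀, hxR⟩
  simp [linCutoff, hx₀, sub_nonpos.2 hxR]

lemma quadCutoff_eqOn (R : ℝ) : EqOn (quadCutoff R) (· ^ 2) (Icc 0 R) := by
  rintro x ⟨hx₀, hxR⟩
  simp [quadCutoff, hx₀, sub_nonpos.2 hxR, show x - 2 * R ≤ 0 by linarith]

lemma linCutoff_bounds {R : ℝ} (hR : 0 ≤ R) (x : ℝ) :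
    0 ≤ linCutoff R x ∧ linCutoff R x ≤ R ∧ linCutoff R x ≤ max x 0 := by
  simp only [linCutoff]
  rcases le_total 0 (x - R) with h₁ | h₁ <;> rcases le_total 0 x with h₂ | h₂ <;>
    simp only [max_eq_left, max_eq_right, *] <;> refine ⟨?_, ?_, ?_⟩ <;> linarith

lemma quadCutoff_bounds {R : ℝ} (hR : 0 ≤ R) (x : ℝ) :
    0 ≤ quadCutoff R x ∧ quadCutoff R x ≤ 2 * R ^ 2 ∧ quadCutoff R x ≤ max x 0 ^ 2 := by
  simp only [quadCutoff]
  rcases le_total 0 (x - 2 * R) with h₁ | h₁ <;> rcases le_total 0 (x - R) with h₂ | h₂ <;>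
    rcases le_total 0 x with h₃ | h₃ <;>
    simp only [max_eq_left, max_eq_right, *] <;> refine ⟨?_, ?_, ?_⟩ <;> nlinarith

lemma abs_dLap_linCutoff_le (R : ℝ) {z : ℝ} (hz : 0 ≤ z) (x : ℝ) :
    |dLap (linCutoff R) z x| ≤ z := by
  have h₀ := dLap_max_zero_bounds hz x
  have h₁ := dLap_max_zero_bounds hz (x - R)
  rw [← dLap_comp_sub_const] at h₁
  simp only [dLap, linCutoff] at *
  rw [abs_le]; constructor <;> linarith

lemma abs_dLap_quadCutoff_le (R : ℝ) {z : ℝ} (hz : 0 ≤ z) (x : ℝ) :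
    |dLap (quadCutoff R) z x| ≤ 4 * z ^ 2 := by
  have h₀ := dLap_max_zero_sq_bounds hz x
  have h₁ := dLap_max_zero_sq_bounds hz (x - R)
  have h₂ := dLap_max_zero_sq_bounds hz (x - 2 * R)
  rw [← dLap_comp_sub_const] at h₁ h₂
  simp only [dLap, quadCutoff] at *
  rw [abs_le]; constructor <;> linarith

lemma MemY.integrableOn_one_add_sq_mul_abs {u : ℝ → ℝ} (hu : MemY 0 2 u) :
    IntegrableOn (fun x => (1 + x ^ 2) * |u x|) (Ioi 0) := by
  simpa only [neg_zero, Real.rpow_zero, Real.rpow_two] using hu.2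

lemma rpow_le_one_add_sq {x l : ℝ} (hx : 0 ≤ x) (hl₀ : 0 ≤ l) (hl₂ : l ≤ 2) :
    x ^ l ≤ 1 + x ^ 2 := by
  rcases le_total x 1 with h | h
  · linarith [Real.rpow_le_one hx h hl₀, sq_nonneg x]
  · have := Real.rpow_le_rpow_of_exponent_le h hl₂
    rw [Real.rpow_two] at this
    linarith

lemma MemY.momFin {u : ℝ → ℝ} (hu : MemY 0 2 u) {l : ℝ} (hl₀ : 0 ≤ l) (hl₂ : l ≤ 2) :
    MomFin l u := by
  refine hu.integrableOn_one_add_sq_mul_abs.mono'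
    ((measurable_id.pow_const l).mul hu.1).aestronglyMeasurable ?_
  filter_upwards [ae_restrict_mem measurableSet_Ioi] with x hx
  rw [norm_mul, Real.norm_eq_abs, abs_of_nonneg (Real.rpow_nonneg hx.le l), Real.norm_eq_abs]
  exact mul_le_mul_of_nonneg_right (rpow_le_one_add_sq hx.le hl₀ hl₂) (abs_nonneg _)

lemma mom_sub_mom {l : ℝ} {u v : ℝ → ℝ} (hu : MomFin l u) (hv : MomFin l v) :
    Mom l u - Mom l v = ∫ x in Ioi 0, x ^ l * (u x - v x) := by
  simp only [Mom, mul_sub]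
  exact (integral_sub hu hv).symm

lemma MemY.sub {β r : ℝ} {u v : ℝ → ℝ} (hu : MemY β r u) (hv : MemY β r v) :
    MemY β r fun x => u x - v x := by
  have hm : Measurable fun x : ℝ => x ^ (-β) + x ^ r :=
    (measurable_id.pow_const _).add (measurable_id.pow_const _)
  refine ⟨hu.1.sub hv.1,
    (hu.2.add hv.2).mono' (hm.mul (hu.1.sub hv.1).abs).aestronglyMeasurable ?_⟩
  filter_upwards [ae_restrict_mem measurableSet_Ioi] with x hx
  have hw : 0 ≤ x ^ (-β) + x ^ r :=
    add_nonneg (Real.rpow_nonneg (le_of_lt hx) _) (Real.rpow_nonneg (le_of_lt hx) _)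
  rw [norm_mul, Real.norm_eq_abs, abs_of_nonneg hw, Real.norm_eq_abs, abs_abs, Pi.add_apply,
    ← mul_add]
  exact mul_le_mul_of_nonneg_left (abs_sub _ _) hw

lemma tendsto_integral_mul_of_eventually_eq {α : Type*} [MeasurableSpace α] {μ : Measure α}
    {F : ℕ → α → ℝ} {G u w : α → ℝ} (hF : ∀ n, AEStronglyMeasurable (F n) μ)
    (hu : AEStronglyMeasurable u μ) (hw : Integrable (fun a => w a * |u a|) μ)
    (hFw : ∀ n, ∀ᵐ a ∂μ, |F n a| ≤ w a) (hFG : ∀ᵐ a ∂μ, ∀ᶠ n in atTop, F n a = G a) :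
    Tendsto (fun n => ∫ a, F n a * u a ∂μ) atTop (𝓝 (∫ a, G a * u a ∂μ)) := by
  refine tendsto_integral_of_dominated_convergence _ (fun n => (hF n).mul hu) hw
    (fun n => (hFw n).mono fun a ha => ?_)
    (hFG.mono fun a ha => tendsto_nhds_of_eventually_eq (ha.mono fun n hn => by rw [hn]))
  rw [norm_mul, Real.norm_eq_abs, Real.norm_eq_abs]
  exact mul_le_mul_of_nonneg_right ha (abs_nonneg _)

lemma eventually_eqOn_Icc {φ : ℝ → ℝ → ℝ} {g : ℝ → ℝ} (h : ∀ R, EqOn (φ R) g (Icc 0 R))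
    (R : ℝ) : ∀ᶠ n : ℕ in atTop, EqOn (φ n) g (Icc 0 R) :=
  (tendsto_natCast_atTop_atTop.eventually_ge_atTop R).mono fun n hn =>
    (h n).mono (Icc_subset_Icc_right hn)

namespace IsWeakSolution

variable {K : ℝ → ℝ → ℝ → ℝ} {T : ℝ≥0∞} {c₀ : ℝ → ℝ} {c : ℝ → ℝ → ℝ} {t : ℝ}

theorem integral_mul_sub_eq_of_approx (hc : IsWeakSolution K 0 2 T c₀ c) (hc₀ : MemY 0 2 c₀)
    (ht₀ : 0 ≤ t) (htT : ENNReal.ofReal t < T)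
    (hz2 : IntegrableOn (fun p => p.2.2.2 ^ 2 * collisionIntegrand K c p) (Ioc 0 t ×ˢ Dcgedg))
    {f : ℕ → ℝ → ℝ} {g : ℝ → ℝ} {C : ℝ} (hf : ∀ n, BddMeas (f n))
    (hf_le : ∀ n x, 0 < x → |f n x| ≤ C * (1 + x ^ 2))
    (hdf_le : ∀ n x z, 0 ≤ z → z ≤ x → |dLap (f n) z x| ≤ C * (1 + z ^ 2))
    (hfg : ∀ R, ∀ᶠ n in atTop, EqOn (f n) g (Icc 0 R)) :
    ∫ x in Ioi 0, g x * (c t x - c₀ x) =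
      ∫ p in Ioc 0 t ×ˢ Dcgedg, dLap g p.2.2.2 p.2.1 * collisionIntegrand K c p := by
  have hdiff := (hc.mem t ht₀ htT).1.sub hc₀
  have hS : MeasurableSet (Ioc (0 : ℝ) t ×ˢ Dcgedg) := measurableSet_Ioc.prod measurableSet_Dcgedg
  have hI : IntegrableOn (collisionIntegrand K c) (Ioc 0 t ×ˢ Dcgedg) := hc.integ t ht₀ htT
  have lhs := tendsto_integral_mul_of_eventually_eq (μ := volume.restrict (Ioi 0)) (G := g)
    (w := fun x => C * (1 + x ^ 2)) (fun n => (hf n).1.aestronglyMeasurable)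
    hdiff.1.aestronglyMeasurable
    (by simpa only [mul_assoc] using hdiff.integrableOn_one_add_sq_mul_abs.const_mul C)
    (fun n => (ae_restrict_mem measurableSet_Ioi).mono fun x hx => hf_le n x hx)
    ((ae_restrict_mem measurableSet_Ioi).mono fun x hx =>
      (hfg x).mono fun n hn => hn ⟨(mem_Ioi.1 hx).le, le_rfl⟩)
  have hdom : IntegrableOn (fun p => C * (1 + p.2.2.2 ^ 2) * |collisionIntegrand K c p|)
      (Ioc 0 t ×ˢ Dcgedg) := by
    refine ((hI.norm.add hz2.norm).const_mul C).congr (Eventually.of_forall fun p => ?_)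
    simp only [Pi.add_apply, Real.norm_eq_abs, abs_mul, abs_pow, sq_abs]
    ring
  have rhs := tendsto_integral_mul_of_eventually_eq
    (F := fun n p => dLap (f n) p.2.2.2 p.2.1) (G := fun p => dLap g p.2.2.2 p.2.1)
    (fun n => (measurable_dLap (hf n).1).aestronglyMeasurable) hI.1 hdom
    (fun n => (ae_restrict_mem hS).mono fun p ⟨_, _, _, hz, hzx, _⟩ => hdf_le n _ _ hz hzx)
    ((ae_restrict_mem hS).mono fun p ⟨_, _, _, hz, hzx, _⟩ =>
      (hfg (p.2.1 + p.2.2.2)).mono fun n hn => dLap_congr fun y hy =>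
        hn (by rcases hy with rfl | rfl | rfl <;> constructor <;> linarith))
  exact tendsto_nhds_unique lhs (rhs.congr fun n => (hc.weak t ht₀ htT (f n) (hf n)).symm)

theorem mom_zero_eq_s14 (hc : IsWeakSolution K 0 2 T c₀ c) (hc₀ : MemY 0 2 c₀) (ht₀ : 0 ≤ t)
    (htT : ENNReal.ofReal t < T) : Mom 0 (c t) = Mom 0 c₀ := by
  have h := hc.weak t ht₀ htT (fun _ => 1) ⟨measurable_const, 1, fun _ => abs_one.le⟩
  rw [← sub_eq_zero, mom_sub_mom ((hc.mem t ht₀ htT).1.momFin le_rfl zero_le_two)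
    (hc₀.momFin le_rfl zero_le_two)]
  norm_num [dLap] at h ⊢
  exact h

theorem mom_one_eq_s14 (hc : IsWeakSolution K 0 2 T c₀ c) (hc₀ : MemY 0 2 c₀) (ht₀ : 0 ≤ t)
    (htT : ENNReal.ofReal t < T)
    (hz2 : IntegrableOn (fun p => p.2.2.2 ^ 2 * collisionIntegrand K c p) (Ioc 0 t ×ˢ Dcgedg)) :
    Mom 1 (c t) = Mom 1 c₀ := by
  have h := hc.integral_mul_sub_eq_of_approx hc₀ ht₀ htT hz2 (g := id) (C := 1)
    (fun n => ⟨by unfold linCutoff; fun_prop, n, fun x => by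
      obtain ⟨h₀, h₁, -⟩ := linCutoff_bounds n.cast_nonneg x
      rwa [abs_of_nonneg h₀]⟩)
    (fun n x hx => by
      obtain ⟨h₀, -, h₂⟩ := linCutoff_bounds n.cast_nonneg x
      rw [abs_of_nonneg h₀, max_eq_left hx.le] at *
      nlinarith)
    (fun n x z hz _ => (abs_dLap_linCutoff_le n hz x).trans (by nlinarith))
    (eventually_eqOn_Icc linCutoff_eqOn)
  rw [← sub_eq_zero, mom_sub_mom ((hc.mem t ht₀ htT).1.momFin zero_le_one one_le_two)
    (hc₀.momFin zero_le_one one_le_two)]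
  simp only [Real.rpow_one]
  refine h.trans (integral_eq_zero_of_ae (Eventually.of_forall fun p => ?_))
  simp only [dLap, id, Pi.zero_apply]
  ring

theorem mom_two_sub_eq (hc : IsWeakSolution K 0 2 T c₀ c) (hc₀ : MemY 0 2 c₀) (ht₀ : 0 ≤ t)
    (htT : ENNReal.ofReal t < T)
    (hz2 : IntegrableOn (fun p => p.2.2.2 ^ 2 * collisionIntegrand K c p) (Ioc 0 t ×ˢ Dcgedg)) :
    Mom 2 (c t) - Mom 2 c₀ =
      2 * ∫ p in Ioc 0 t ×ˢ Dcgedg, p.2.2.2 ^ 2 * collisionIntegrand K c p := by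
  have h := hc.integral_mul_sub_eq_of_approx hc₀ ht₀ htT hz2 (g := (· ^ 2)) (C := 4)
    (fun n => ⟨by unfold quadCutoff; fun_prop, 2 * n ^ 2, fun x => by
      obtain ⟨h₀, h₁, -⟩ := quadCutoff_bounds n.cast_nonneg x
      rwa [abs_of_nonneg h₀]⟩)
    (fun n x hx => by
      obtain ⟨h₀, -, h₂⟩ := quadCutoff_bounds n.cast_nonneg x
      rw [abs_of_nonneg h₀, max_eq_left hx.le] at *
      nlinarith)
    (fun n x z hz _ => (abs_dLap_quadCutoff_le n hz x).trans (by nlinarith))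
    (eventually_eqOn_Icc quadCutoff_eqOn)
  rw [mom_sub_mom ((hc.mem t ht₀ htT).1.momFin zero_le_two le_rfl)
    (hc₀.momFin zero_le_two le_rfl), ← integral_const_mul]
  simp only [Real.rpow_two]
  rw [h]
  congr 1 with p
  simp only [dLap]
  ring

end IsWeakSolution

lemma integral_prod_nonneg_of_ae_ae {α β : Type*} [MeasurableSpace α] [MeasurableSpace β]
    {μ : Measure α} {ν : Measure β} [SFinite μ] [SFinite ν] {f : α × β → ℝ}
    (hf : ∀ᵐ a ∂μ, ∀ᵐ b ∂ν, 0 ≤ f (a, b)) : 0 ≤ ∫ p, f p ∂μ.prod ν := by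
  by_cases hint : Integrable f (μ.prod ν)
  · rw [integral_prod f hint]
    exact integral_nonneg_of_ae (hf.mono fun a ha => integral_nonneg_of_ae ha)
  · exact (integral_undef hint).ge

lemma ae_restrict_Dcgedg_nonneg {u : ℝ → ℝ} (hu : ∀ᵐ x ∂volume.restrict (Ioi 0), 0 ≤ u x) :
    ∀ᵐ q ∂volume.restrict Dcgedg, 0 ≤ u q.1 ∧ 0 ≤ u q.2.1 := by
  rw [Measure.restrict_congr_set Ioi_ae_eq_Ici, ae_restrict_iff' measurableSet_Ici] at hu
  have h₁ : ∀ᵐ q : ℝ × ℝ × ℝ, 0 ≤ q.1 → 0 ≤ u q.1 := by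
    rw [Measure.volume_eq_prod]
    exact Measure.quasiMeasurePreserving_fst.ae hu
  have h₂ : ∀ᵐ q : ℝ × ℝ × ℝ, 0 ≤ q.2.1 → 0 ≤ u q.2.1 := by
    rw [Measure.volume_eq_prod, Measure.volume_eq_prod]
    exact Measure.quasiMeasurePreserving_snd.ae (Measure.quasiMeasurePreserving_fst.ae hu)
  filter_upwards [ae_restrict_of_ae h₁, ae_restrict_of_ae h₂,
    ae_restrict_mem measurableSet_Dcgedg] with q hq₁ hq₂ hq
  exact ⟨hq₁ hq.1, hq₂ hq.2.1⟩

-- `c` need not be jointly measurable in `(s, x)`, so positivity is used one time slice at a time.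
lemma setIntegral_collisionIntegrand_nonneg {K : ℝ → ℝ → ℝ → ℝ} (hK : ∀ x y z, 0 ≤ K x y z)
    {c : ℝ → ℝ → ℝ} {s t : ℝ} (hc : ∀ τ ∈ Ioc s t, ∀ᵐ x ∂volume.restrict (Ioi 0), 0 ≤ c τ x)
    {w : ℝ × ℝ × ℝ → ℝ} (hw : ∀ q ∈ Dcgedg, 0 ≤ w q) :
    0 ≤ ∫ p in Ioc s t ×ˢ Dcgedg, w p.2 * collisionIntegrand K c p := by
  rw [Measure.volume_eq_prod, ← Measure.prod_restrict]
  refine integral_prod_nonneg_of_ae_ae ?_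
  filter_upwards [ae_restrict_mem measurableSet_Ioc] with τ hτ
  filter_upwards [ae_restrict_Dcgedg_nonneg (hc τ hτ), ae_restrict_mem measurableSet_Dcgedg]
    with q ⟨hx, hy⟩ hq
  exact mul_nonneg (hw q hq) (mul_nonneg (mul_nonneg (hK _ _ _) hx) hy)

lemma setIntegral_Ioc_prod_add {β : Type*} [MeasurableSpace β] {μ : Measure (ℝ × β)}
    {B : Set β} (hB : MeasurableSet B) {f : ℝ × β → ℝ} {a b d : ℝ} (hab : a ≤ b) (hbd : b ≤ d)
    (hf : IntegrableOn f (Ioc a d ×ˢ B) μ) :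
    ∫ p in Ioc a b ×ˢ B, f p ∂μ + ∫ p in Ioc b d ×ˢ B, f p ∂μ = ∫ p in Ioc a d ×ˢ B, f p ∂μ := by
  rw [← Ioc_union_Ioc_eq_Ioc hab hbd, union_prod] at hf ⊢
  exact (setIntegral_union ((Ioc_disjoint_Ioc_of_le le_rfl).set_prod_left B B)
    (measurableSet_Ioc.prod hB) hf.left_of_union hf.right_of_union).symm

theorem cgedg_conservation_and_monotone_second_moment_general
    (K : ℝ → ℝ → ℝ → ℝ) (hK : IsKernel K)
    (c₀ : ℝ → ℝ) (hc₀ : MemYplus 0 2 c₀)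
    (T : ℝ≥0∞)
    (c : ℝ → ℝ → ℝ) (hc : IsWeakSolution K 0 2 T c₀ c)
    (hz2 : ∀ t : ℝ, 0 ≤ t → ENNReal.ofReal t < T →
      IntegrableOn (fun p : ℝ × ℝ × ℝ × ℝ =>
          p.2.2.2 ^ 2 * (K p.2.1 p.2.2.1 p.2.2.2 * c p.1 p.2.1 * c p.1 p.2.2.1))
        ((Ioc (0:ℝ) t) ×ˢ Dcgedg)) :
    (∀ t : ℝ, 0 ≤ t → ENNReal.ofReal t < T →
      Mom 0 (c t) = Mom 0 c₀ ∧ Mom 1 (c t) = Mom 1 c₀ ∧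
      Mom 2 (c t) - Mom 2 c₀ =
        2 * (∫ p in (Ioc (0:ℝ) t) ×ˢ Dcgedg,
          p.2.2.2 ^ 2 * (K p.2.1 p.2.2.1 p.2.2.2 * c p.1 p.2.1 * c p.1 p.2.2.1)) ∧
      0 ≤ (∫ p in (Ioc (0:ℝ) t) ×ˢ Dcgedg,
          p.2.2.2 ^ 2 * (K p.2.1 p.2.2.1 p.2.2.2 * c p.1 p.2.1 * c p.1 p.2.2.1))) ∧
    (∀ s t : ℝ, 0 ≤ s → s ≤ t → ENNReal.ofReal t < T →
      Mom 2 (c s) ≤ Mom 2 (c t)) := by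
  have hnonneg : ∀ s t : ℝ, 0 ≤ s → ENNReal.ofReal t < T →
      0 ≤ ∫ p in Ioc s t ×ˢ Dcgedg, p.2.2.2 ^ 2 * collisionIntegrand K c p :=
    fun s t hs htT => setIntegral_collisionIntegrand_nonneg (w := fun q => q.2.2 ^ 2) hK.nonneg
      (fun τ hτ => (hc.mem τ (hs.trans hτ.1.le)
        ((ENNReal.ofReal_le_ofReal hτ.2).trans_lt htT)).2) fun q _ => sq_nonneg _
  have hmom₂ : ∀ t, 0 ≤ t → ENNReal.ofReal t < T → Mom 2 (c t) - Mom 2 c₀ =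
      2 * ∫ p in Ioc 0 t ×ˢ Dcgedg, p.2.2.2 ^ 2 * collisionIntegrand K c p :=
    fun t ht₀ htT => hc.mom_two_sub_eq hc₀.1 ht₀ htT (hz2 t ht₀ htT)
  refine ⟨fun t ht₀ htT => ⟨hc.mom_zero_eq_s14 hc₀.1 ht₀ htT,
    hc.mom_one_eq_s14 hc₀.1 ht₀ htT (hz2 t ht₀ htT), hmom₂ t ht₀ htT, hnonneg 0 t le_rfl htT⟩,
    fun s t hs hst htT => ?_⟩
  have hsT : ENNReal.ofReal s < T := (ENNReal.ofReal_le_ofReal hst).trans_lt htT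
  have hsplit := setIntegral_Ioc_prod_add (f := fun p => p.2.2.2 ^ 2 * collisionIntegrand K c p)
    measurableSet_Dcgedg hs hst (hz2 t (hs.trans hst) htT)
  linarith [hmom₂ s hs hsT, hmom₂ t (hs.trans hst) htT, hnonneg s t hs htT]

/-- Conservation laws and monotonicity of the second moment. -/
theorem cgedg_conservation_and_monotone_second_moment
    (K : ℝ → ℝ → ℝ → ℝ) (hK : IsKernel K)
    (c₀ : ℝ → ℝ) (hc₀ : MemYplus 0 2 c₀)
    (T : ℝ≥0∞) (hT : 0 < T)
    (c : ℝ → ℝ → ℝ) (hc : IsWeakSolution K 0 2 T c₀ c)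
    (hgel : T ≤ gelTime T c)
    (hz2 : ∀ t : ℝ, 0 ≤ t → ENNReal.ofReal t < T →
      IntegrableOn (fun p : ℝ × ℝ × ℝ × ℝ =>
          p.2.2.2 ^ 2 * (K p.2.1 p.2.2.1 p.2.2.2 * c p.1 p.2.1 * c p.1 p.2.2.1))
        ((Ioc (0:ℝ) t) ×ˢ Dcgedg)) :
    (∀ t : ℝ, 0 ≤ t → ENNReal.ofReal t < T →
      Mom 0 (c t) = Mom 0 c₀ ∧ Mom 1 (c t) = Mom 1 c₀ ∧
      Mom 2 (c t) - Mom 2 c₀ =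
        2 * (∫ p in (Ioc (0:ℝ) t) ×ˢ Dcgedg,
          p.2.2.2 ^ 2 * (K p.2.1 p.2.2.1 p.2.2.2 * c p.1 p.2.1 * c p.1 p.2.2.1)) ∧
      0 ≤ (∫ p in (Ioc (0:ℝ) t) ×ˢ Dcgedg,
          p.2.2.2 ^ 2 * (K p.2.1 p.2.2.1 p.2.2.2 * c p.1 p.2.1 * c p.1 p.2.2.1))) ∧
    (∀ s t : ℝ, 0 ≤ s → s ≤ t → ENNReal.ofReal t < T →
      Mom 2 (c s) ≤ Mom 2 (c t)) :=
  cgedg_conservation_and_monotone_second_moment_general K hK c₀ hc₀ T c hc hz2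
end
end
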